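/- arXiv:2112.11341 — 3 statements merged into one kernel-verified Lean document; each statement's English description precedes it below -/
import Mathlib

section
/- If G is an infinite group, then the multiplication graph { (x,y,z) ∈ G³ : x·y = z } is not a finite Boolean combination (finite unions, intersections, complements) of cylinders over pairs of coordinates, i.e., of sets of the form {(x,y,z) : (x,y) ∈ P}, {(x,y,z) : (y,z) ∈ Q}, or {(x,y,z) : (x,z) ∈ R} for subsets P, Q, R of G². -/
/-- A cylinder over a pair of coordinates in `G³`: the preimage of a subset of
`G²` under one of the three coordinate-pair projections. -/
def IsPairCylinder {G : Type*} (S : Set (G × G × G)) : Prop :=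
  (∃ P : Set (G × G), S = {p | (p.1, p.2.1) ∈ P}) ∨
  (∃ P : Set (G × G), S = {p | (p.2.1, p.2.2) ∈ P}) ∨
  (∃ P : Set (G × G), S = {p | (p.1, p.2.2) ∈ P})

/-- Membership in the Boolean algebra of sets generated by a family `B`. -/
inductive BoolComb {α : Type*} (B : Set (Set α)) : Set α → Prop
  | base : ∀ s ∈ B, BoolComb B s
  | empty : BoolComb B ∅
  | compl : ∀ s, BoolComb B s → BoolComb B sᶜ
  | union : ∀ s t, BoolComb B s → BoolComb B t → BoolComb B (s ∪ t)
  | inter : ∀ s t, BoolComb B s → BoolComb B t → BoolComb B (s ∩ t)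


open Filter

attribute [local instance] Ultrafilter.mul Ultrafilter.semigroup

/-- Pigeonhole for ultrafilters: a function to a finite type is constant on an
ultrafilter-large set. -/
lemma exists_fiber_mem {α : Type*} {C : Type} [Finite C] (U : Ultrafilter α) (f : α → C) :
    ∃ c, {x | f x = c} ∈ U := by
  by_contra h
  push_neg at h
  have h' : ∀ c : C, {x | f x ≠ c} ∈ U := fun c =>
    (Ultrafilter.compl_mem_iff_notMem (s := {x | f x = c})).mpr (h c)
  have hint : (⋂ c : C, {x | f x ≠ c}) ∈ U := (Filter.iInter_mem).mpr h'
  obtain ⟨x, hx⟩ := Ultrafilter.nonempty_of_mem hint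
  exact (Set.mem_iInter.mp hx (f x)) rfl

/-- An infinite group carries a nonprincipal idempotent ultrafilter. -/
lemma exists_idem_cofinite {G : Type*} [Group G] [Infinite G] :
    ∃ U : Ultrafilter G, U * U = U ∧ (↑U : Filter G) ≤ cofinite := by
  let S : Set (Ultrafilter G) := {U | (↑U : Filter G) ≤ cofinite}
  have hSclosed : IsClosed S := by
    have : S = ⋂ (A : Set G) (_ : A ∈ (cofinite : Filter G)), {U : Ultrafilter G | A ∈ U} := by
      ext U
      simp only [S, Set.mem_setOf_eq, Filter.le_def, Set.mem_iInter]
      rfl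
    rw [this]
    exact isClosed_iInter fun A => isClosed_iInter fun _ => ultrafilter_isClosed_basic A
  have hne : (cofinite : Filter G).NeBot := Filter.cofinite_neBot
  have hSne : S.Nonempty := ⟨Ultrafilter.of cofinite, Ultrafilter.of_le _⟩
  have hSmul : ∀ U ∈ S, ∀ V ∈ S, U * V ∈ S := by
    intro U hU V hV A hA
    have hev : ∀ᶠ a in (↑U : Filter G), ∀ᶠ b in (↑V : Filter G), a * b ∈ A := by
      apply Filter.Eventually.of_forall
      intro a
      have : (fun b => a * b) ⁻¹' A ∈ (cofinite : Filter G) := by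
        rw [Filter.mem_cofinite] at hA ⊢
        rw [← Set.preimage_compl]
        exact hA.preimage ((mul_right_injective a).injOn)
      exact hV this
    exact (Ultrafilter.eventually_mul U V _).mpr hev
  obtain ⟨U, hUS, hidem⟩ := exists_idempotent_in_compact_subsemigroup
    Ultrafilter.continuous_mul_left S hSne hSclosed.isCompact hSmul
  exact ⟨U, hidem, hUS⟩

/-- The "corners" Ramsey lemma: any finite coloring of `G × G` (`G` an infinite group)
contains a monochromatic corner `{(x,y), (x*s, y), (x, s*y)}` with `s ≠ 1`. -/
lemma exists_corner {G : Type*} [Group G] [Infinite G] {C : Type} [Finite C]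
    (F : G → G → C) :
    ∃ x y s : G, s ≠ 1 ∧ F (x * s) y = F x y ∧ F x (s * y) = F x y := by
  obtain ⟨U, Uidem, Ule⟩ := exists_idem_cofinite (G := G)
  -- key consequence of idempotence
  have key_mul : ∀ p : G → Prop, {m | p m} ∈ U → {a | {b | p (a * b)} ∈ U} ∈ U := by
    intro p hp
    have h1 : ∀ᶠ m in (↑(U * U) : Filter G), p m := by
      rw [Uidem]; exact hp
    exact (Ultrafilter.eventually_mul U U p).mp h1
  choose c₁ h₁ using fun x => exists_fiber_mem U (F x)
  obtain ⟨c, hc⟩ := exists_fiber_mem U c₁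
  -- pick x in A ∩ A*
  have hstar : {a | {b | c₁ (a * b) = c} ∈ U} ∈ U := key_mul (fun m => c₁ m = c) hc
  obtain ⟨x, hxA, hxstar⟩ := Ultrafilter.nonempty_of_mem (Filter.inter_mem hc hstar)
  -- pick s
  have hDx : {a | {b | F x (a * b) = c₁ x} ∈ U} ∈ U := key_mul (fun m => F x m = c₁ x) (h₁ x)
  have hne1 : {s : G | s ≠ 1} ∈ U := by
    apply Ule
    rw [Filter.mem_cofinite]
    simp only [Set.compl_setOf, not_not]
    exact Set.finite_singleton (1 : G)
  obtain ⟨s, hs⟩ := Ultrafilter.nonempty_of_mem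
    (Filter.inter_mem (Filter.inter_mem hxstar hDx) hne1)
  obtain ⟨⟨hsA, hsD⟩, hs1⟩ := hs
  -- pick y
  obtain ⟨y, hy⟩ := Ultrafilter.nonempty_of_mem
    (Filter.inter_mem (Filter.inter_mem (h₁ x) (h₁ (x * s))) hsD)
  obtain ⟨⟨hy1, hy2⟩, hy3⟩ := hy
  refine ⟨x, y, s, hs1, ?_, ?_⟩
  · -- F (x*s) y = F x y
    have : F (x * s) y = c₁ (x * s) := hy2
    rw [this, hsA, ← hxA, hy1]
  · -- F x (s*y) = F x y
    have : F x (s * y) = c₁ x := hy3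
    rw [this, hy1]

/-- Every Boolean combination of pair cylinders is determined by three finite
colorings of the coordinate pairs. -/
lemma repr_of_boolComb {G : Type*} (S : Set (G × G × G))
    (h : BoolComb {S : Set (G × G × G) | IsPairCylinder S} S) :
    ∃ (C₁ C₂ C₃ : Type) (_ : Finite C₁) (_ : Finite C₂) (_ : Finite C₃)
      (u : G → G → C₁) (v : G → G → C₂) (w : G → G → C₃) (R : Set (C₁ × C₂ × C₃)),
      S = {p : G × G × G | (u p.1 p.2.1, v p.2.1 p.2.2, w p.1 p.2.2) ∈ R} := by
  induction h with
  | base s hs =>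
    rcases hs with ⟨P, rfl⟩ | ⟨P, rfl⟩ | ⟨P, rfl⟩
    · exact ⟨Prop, Unit, Unit, inferInstance, inferInstance, inferInstance,
        fun a b => (a, b) ∈ P, fun _ _ => (), fun _ _ => (), {t | t.1}, rfl⟩
    · exact ⟨Unit, Prop, Unit, inferInstance, inferInstance, inferInstance,
        fun _ _ => (), fun a b => (a, b) ∈ P, fun _ _ => (), {t | t.2.1}, rfl⟩
    · exact ⟨Unit, Unit, Prop, inferInstance, inferInstance, inferInstance,
        fun _ _ => (), fun _ _ => (), fun a b => (a, b) ∈ P, {t | t.2.2}, rfl⟩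
  | empty =>
    exact ⟨Unit, Unit, Unit, inferInstance, inferInstance, inferInstance,
      fun _ _ => (), fun _ _ => (), fun _ _ => (), ∅, by ext p; simp⟩
  | compl s _ ih =>
    obtain ⟨C₁, C₂, C₃, f₁, f₂, f₃, u, v, w, R, rfl⟩ := ih
    exact ⟨C₁, C₂, C₃, f₁, f₂, f₃, u, v, w, Rᶜ, rfl⟩
  | union s t _ _ ihs iht =>
    obtain ⟨C₁, C₂, C₃, f₁, f₂, f₃, u, v, w, R, rfl⟩ := ihs
    obtain ⟨D₁, D₂, D₃, g₁, g₂, g₃, u', v', w', R', rfl⟩ := iht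
    have := f₁; have := f₂; have := f₃; have := g₁; have := g₂; have := g₃
    refine ⟨C₁ × D₁, C₂ × D₂, C₃ × D₃, inferInstance, inferInstance, inferInstance,
      fun a b => (u a b, u' a b), fun a b => (v a b, v' a b), fun a b => (w a b, w' a b),
      {t | (t.1.1, t.2.1.1, t.2.2.1) ∈ R ∨ (t.1.2, t.2.1.2, t.2.2.2) ∈ R'}, ?_⟩
    ext p
    simp [Set.mem_union, Set.mem_setOf_eq]
  | inter s t _ _ ihs iht =>
    obtain ⟨C₁, C₂, C₃, f₁, f₂, f₃, u, v, w, R, rfl⟩ := ihs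
    obtain ⟨D₁, D₂, D₃, g₁, g₂, g₃, u', v', w', R', rfl⟩ := iht
    have := f₁; have := f₂; have := f₃; have := g₁; have := g₂; have := g₃
    refine ⟨C₁ × D₁, C₂ × D₂, C₃ × D₃, inferInstance, inferInstance, inferInstance,
      fun a b => (u a b, u' a b), fun a b => (v a b, v' a b), fun a b => (w a b, w' a b),
      {t | (t.1.1, t.2.1.1, t.2.2.1) ∈ R ∧ (t.1.2, t.2.1.2, t.2.2.2) ∈ R'}, ?_⟩
    ext p
    simp [Set.mem_inter_iff, Set.mem_setOf_eq]

/-- For an infinite group `G`, the multiplication graph in `G³` is not a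
finite Boolean combination of cylinders over pairs of coordinates. -/
theorem mul_graph_not_boolComb_pair_cylinders
    {G : Type*} [Group G] [Infinite G] :
    ¬ BoolComb {S : Set (G × G × G) | IsPairCylinder S}
        {p : G × G × G | p.1 * p.2.1 = p.2.2} := by
  intro h
  obtain ⟨C₁, C₂, C₃, f₁, f₂, f₃, u, v, w, R, hrepr⟩ := repr_of_boolComb _ h
  have key : ∀ x y z : G, x * y = z ↔ (u x y, v y z, w x z) ∈ R := by
    intro x y z
    have := Set.ext_iff.mp hrepr (x, y, z)
    simpa using this
  haveI : Finite C₁ := f₁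
  haveI : Finite C₂ := f₂
  haveI : Finite C₃ := f₃
  -- the "on-diagonal" coloring
  set F : G → G → C₁ × C₂ × C₃ := fun p q => (u p q, v q (p * q), w p (p * q)) with hF
  obtain ⟨x, y, s, hs, h2, h3⟩ := exists_corner F
  -- components of the corner equalities
  have hu : u x y = (F x y).1 := rfl
  have hv : v y (x * s * y) = (F x y).2.1 := by
    have := congrArg (fun t => t.2.1) h2
    simpa [hF] using this
  have hw : w x (x * (s * y)) = (F x y).2.2 := by
    have := congrArg (fun t => t.2.2) h3
    simpa [hF] using this
  have hon : (u x y, v y (x * y), w x (x * y)) ∈ R := (key x y (x * y)).mp rfl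
  have hon' : ((F x y).1, (F x y).2.1, (F x y).2.2) ∈ R := hon
  have hoff : (u x y, v y (x * (s * y)), w x (x * (s * y))) ∈ R := by
    rw [show x * (s * y) = x * s * y from (mul_assoc x s y).symm] at hw ⊢
    rw [hu, hv, hw]
    exact hon'
  have : x * y = x * (s * y) := (key x y (x * (s * y))).mpr hoff
  have : y = s * y := by
    exact mul_left_cancel this
  exact hs (right_eq_mul.mp this)
end

section
/- For a group G, the following are equivalent: (1) G is finite; (2) the multiplication graph {(x,y,z) ∈ G³ : x·y = z} lies in the Boolean algebra of subsets of G³ generated by cylinders over pairs of coordinates (preimages of arbitrary subsets of G² under the three coordinate-pair projections). -/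
attribute [local instance] Ultrafilter.mul Ultrafilter.semigroup

open Filter

/-- Any Boolean combination is determined by membership in finitely many of the
generating sets. -/
theorem boolComb_invariance {α : Type*} {B : Set (Set α)} {S : Set α} (h : BoolComb B S) :
    ∃ (ι : Type) (_ : Finite ι) (C : ι → Set α), (∀ i, C i ∈ B) ∧
      ∀ p q : α, (∀ i, p ∈ C i ↔ q ∈ C i) → (p ∈ S ↔ q ∈ S) := by
  induction h with
  | base s hs =>
      exact ⟨PUnit, inferInstance, fun _ => s, fun _ => hs, fun p q hpq => hpq PUnit.unit⟩
  | empty =>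
      exact ⟨PEmpty, inferInstance, PEmpty.elim, fun i => i.elim, fun p q _ => Iff.rfl⟩
  | compl s _ ih =>
      obtain ⟨ι, hι, C, h1, h2⟩ := ih
      exact ⟨ι, hι, C, h1, fun p q hpq => not_congr (h2 p q hpq)⟩
  | union s t _ _ ih1 ih2 =>
      obtain ⟨ι1, hι1, C1, h11, h12⟩ := ih1
      obtain ⟨ι2, hι2, C2, h21, h22⟩ := ih2
      haveI := hι1; haveI := hι2
      refine ⟨ι1 ⊕ ι2, inferInstance, Sum.elim C1 C2, ?_, ?_⟩
      · rintro (i | i)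
        · exact h11 i
        · exact h21 i
      · intro p q hpq
        simp only [Set.mem_union]
        exact or_congr (h12 p q fun i => hpq (Sum.inl i)) (h22 p q fun i => hpq (Sum.inr i))
  | inter s t _ _ ih1 ih2 =>
      obtain ⟨ι1, hι1, C1, h11, h12⟩ := ih1
      obtain ⟨ι2, hι2, C2, h21, h22⟩ := ih2
      haveI := hι1; haveI := hι2
      refine ⟨ι1 ⊕ ι2, inferInstance, Sum.elim C1 C2, ?_, ?_⟩
      · rintro (i | i)
        · exact h11 i
        · exact h21 i
      · intro p q hpq
        simp only [Set.mem_inter_iff]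
        exact and_congr (h12 p q fun i => hpq (Sum.inl i)) (h22 p q fun i => hpq (Sum.inr i))

/-- The corners theorem for colorings in an arbitrary infinite group: every finite
coloring of `G × G` admits a "corner" `(x,y)`, `(x*g,y)`, `(x,g*y)` with `g ≠ 1`,
on which the coloring is constant.  Proved using a nonprincipal idempotent
ultrafilter on `G`. -/
theorem exists_mono_corner {G : Type*} [Group G] [Infinite G] {K : Type*} [Finite K]
    (κ : G → G → K) :
    ∃ x y g : G, g ≠ 1 ∧ κ x y = κ (x * g) y ∧ κ x (g * y) = κ (x * g) y := by
  classical
  -- the closed subsemigroup of nonprincipal ultrafilters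
  let s : Set (Ultrafilter G) := {U | ∀ a : G, ({a}ᶜ : Set G) ∈ U}
  have hclosed : IsClosed s := by
    have : s = ⋂ a : G, {U : Ultrafilter G | ({a}ᶜ : Set G) ∈ U} := by
      ext U; simp [s, Set.mem_iInter]
    rw [this]
    exact isClosed_iInter fun a => ultrafilter_isClosed_basic _
  have hne : s.Nonempty :=
    ⟨Filter.hyperfilter G, fun a =>
      Filter.compl_mem_hyperfilter_of_finite (Set.finite_singleton a)⟩
  have hmul : ∀ x ∈ s, ∀ y ∈ s, x * y ∈ s := by
    intro U hU V hV a
    have key : ∀ m : G, {m' : G | m * m' ∈ ({a}ᶜ : Set G)} ∈ V := by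
      intro m
      have he : {m' : G | m * m' ∈ ({a}ᶜ : Set G)} = ({m⁻¹ * a}ᶜ : Set G) := by
        ext m'
        simp only [Set.mem_setOf_eq, Set.mem_compl_iff, Set.mem_singleton_iff]
        constructor
        · intro h hm; exact h (by rw [hm, mul_inv_cancel_left])
        · intro h hm; exact h (by rw [← hm, inv_mul_cancel_left])
      rw [he]
      exact hV (m⁻¹ * a)
    have hev : ∀ᶠ m in (U : Filter G), ∀ᶠ m' in (V : Filter G), m * m' ∈ ({a}ᶜ : Set G) := by
      apply Filter.Eventually.of_forall
      intro m
      exact Filter.eventually_iff.2 (key m)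
    have := (Ultrafilter.eventually_mul U V (· ∈ ({a}ᶜ : Set G))).2 hev
    exact this
  obtain ⟨p, hps, hpp⟩ :=
    exists_idempotent_in_compact_subsemigroup Ultrafilter.continuous_mul_left s hne
      hclosed.isCompact hmul
  -- the star property from idempotence
  have star : ∀ A : Set G, A ∈ p → {m : G | {m' : G | m * m' ∈ A} ∈ p} ∈ p := by
    intro A hA
    have h0 : A ∈ p * p := hpp.symm ▸ hA
    have h1 : ∀ᶠ m in ((p * p : Ultrafilter G) : Filter G), m ∈ A := by
      simpa [Filter.eventually_iff] using h0
    have h2 := (Ultrafilter.eventually_mul p p (· ∈ A)).1 h1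
    have h3 : {m : G | ∀ᶠ m' in (p : Filter G), m * m' ∈ A} ∈ (p : Filter G) :=
      Filter.eventually_iff.1 h2
    have h4 : {m : G | ∀ᶠ m' in (p : Filter G), m * m' ∈ A}
        = {m : G | {m' : G | m * m' ∈ A} ∈ p} := by
      ext m
      exact ⟨fun h => Filter.eventually_iff.1 h, fun h => Filter.eventually_iff.2 h⟩
    exact h4 ▸ h3
  -- in a finite coloring, some color class is p-large
  haveI : Nonempty K := ⟨κ 1 1⟩
  have hcolor : ∀ f : G → K, ∃ c : K, {a : G | f a = c} ∈ p := by
    intro f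
    by_contra hcon
    push_neg at hcon
    have h1 : ∀ c : K, ({a : G | f a = c}ᶜ : Set G) ∈ p := fun c =>
      (Ultrafilter.compl_mem_iff_notMem).2 (hcon c)
    have h2 : (⋂ c : K, ({a : G | f a = c}ᶜ : Set G)) ∈ (p : Filter G) :=
      Filter.iInter_mem.2 fun c => h1 c
    have h3 : (⋂ c : K, ({a : G | f a = c}ᶜ : Set G)) = (∅ : Set G) := by
      ext a
      simp
    rw [h3] at h2
    exact (Filter.empty_notMem _) h2
  have hint : ∀ {A B : Set G}, A ∈ p → B ∈ p → (A ∩ B) ∈ p := by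
    intro A B hA hB
    exact Filter.inter_mem hA hB
  -- the row-color function
  choose h hh using fun x : G => hcolor (κ x)
  obtain ⟨c, hc⟩ := hcolor h
  have hstarC : {m : G | {g : G | m * g ∈ {x : G | h x = c}} ∈ p} ∈ p := star _ hc
  obtain ⟨x, hxC, hxstar⟩ :=
    Ultrafilter.nonempty_of_mem (hint hc hstarC)
  have hxc : h x = c := hxC
  have hB : {y : G | κ x y = c} ∈ p := by
    have := hh x; rwa [hxc] at this
  have hstarB := star _ hB
  obtain ⟨g, hgmem, hg3⟩ :=
    Ultrafilter.nonempty_of_mem (hint (hint hxstar hstarB) (hps 1))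
  obtain ⟨hg1, hg2⟩ := hgmem
  obtain ⟨y, hymem, hy3⟩ :=
    Ultrafilter.nonempty_of_mem (hint (hint hB hg2) (hh (x * g)))
  obtain ⟨hy1, hy2⟩ := hymem
  have hxgC : h (x * g) = c := hg1
  refine ⟨x, y, g, fun hg => hg3 (by simpa using hg), ?_, ?_⟩
  · exact hy1.trans ((hy3.trans hxgC).symm : c = κ (x * g) y)
  · exact hy2.trans ((hy3.trans hxgC).symm : c = κ (x * g) y)

/-- A group is finite iff its multiplication graph lies in the Boolean algebra
generated by the cylinders over pairs of coordinates in `G³`. -/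
theorem finite_iff_mul_graph_boolComb_pair_cylinders {G : Type*} [Group G] :
    Finite G ↔
      BoolComb {S : Set (G × G × G) | IsPairCylinder S}
        {p : G × G × G | p.1 * p.2.1 = p.2.2} := by
  classical
  constructor
  · -- forward: a finite group's multiplication graph is a finite union of
    -- intersections of two cylinders
    intro hfin
    haveI := hfin
    haveI := Fintype.ofFinite (G × G)
    set B : Set (Set (G × G × G)) := {S | IsPairCylinder S} with hBdef
    set T : G × G → Set (G × G × G) := fun a =>
      {p : G × G × G | (p.1, p.2.1) ∈ ({a} : Set (G × G))} ∩
      {p : G × G × G | (p.2.1, p.2.2) ∈ ({(a.2, a.1 * a.2)} : Set (G × G))} with hTdef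
    have hpiece : ∀ a : G × G, BoolComb B (T a) := by
      intro a
      refine BoolComb.inter _ _ (BoolComb.base _ ?_) (BoolComb.base _ ?_)
      · exact Or.inl ⟨{a}, rfl⟩
      · exact Or.inr (Or.inl ⟨{(a.2, a.1 * a.2)}, rfl⟩)
    have key : ∀ s : Finset (G × G), BoolComb B (⋃ a ∈ s, T a) := by
      intro s
      induction s using Finset.induction_on with
      | empty => simpa using BoolComb.empty
      | insert _ _ ha ih =>
          rw [Finset.set_biUnion_insert]
          exact BoolComb.union _ _ (hpiece _) ih
    have heq : {p : G × G × G | p.1 * p.2.1 = p.2.2}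
        = ⋃ a ∈ (Finset.univ : Finset (G × G)), T a := by
      ext ⟨x, y, z⟩
      simp only [hTdef, Set.mem_iUnion, Set.mem_inter_iff, Set.mem_setOf_eq,
        Set.mem_singleton_iff, Finset.mem_univ, exists_true_left]
      constructor
      · intro hz
        refine ⟨(x, y), rfl, ?_⟩
        rw [← hz]
      · rintro ⟨⟨a1, a2⟩, h1, h2⟩
        cases h1
        rw [Prod.mk.injEq] at h2
        exact h2.2.symm
    rw [heq]
    exact key _
  · -- reverse: if the graph is such a Boolean combination, `G` is finite
    intro hB
    by_contra hfin
    rw [not_finite_iff_infinite] at hfin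
    obtain ⟨ι, hι, C, hmem, hinv⟩ := boolComb_invariance hB
    haveI := hι
    let κ : G → G → (ι → Bool) := fun x y i => decide ((x, y, x * y) ∈ C i)
    obtain ⟨x, y, g, hg, h1, h2⟩ := exists_mono_corner κ
    apply hg
    have hiff : ∀ i, ((x, y, x * g * y) ∈ C i) ↔ ((x * g, y, x * g * y) ∈ C i) := by
      intro i
      have e1 : ((x, y, x * y) ∈ C i) ↔ ((x * g, y, x * g * y) ∈ C i) :=
        decide_eq_decide.mp (congrFun h1 i)
      have e2 : ((x, g * y, x * (g * y)) ∈ C i) ↔ ((x * g, y, x * g * y) ∈ C i) :=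
        decide_eq_decide.mp (congrFun h2 i)
      rcases hmem i with ⟨P, hP⟩ | ⟨P, hP⟩ | ⟨P, hP⟩
      · rw [hP] at e1 ⊢
        simpa using e1
      · rw [hP]
        exact Iff.rfl
      · rw [hP] at e2 ⊢
        simp only [Set.mem_setOf_eq] at e2 ⊢
        rw [← mul_assoc] at e2
        exact e2
    have hq : x * y = x * g * y := by
      have := hinv (x, y, x * g * y) (x * g, y, x * g * y) hiff
      exact this.mpr rfl
    have hx : x = x * g := mul_right_cancel hq
    exact left_eq_mul.mp hx
end

section
/- Let M be an infinite set and S ⊆ M^m (m ≥ 2) a subset such that: (a) for every choice of m−1 coordinates fixed to arbitrary values, the set of values of the remaining coordinate lying in S is finite and nonempty; (b) for each i ≤ m, the projection of S forgetting the i-th coordinate is cofinite in M^{m−1}. Then S is not a finite union of boxes A₁ × ⋯ × A_m with Aⱼ ⊆ M. -/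
/-! A nonempty box `A₁ × ⋯ × A_m` inside `S` has every factor `Aᵢ` contained in a section of `S`
through one of its points, so finite sections force every box in `S` to be finite. A finite union
of boxes would then make `S` finite, hence also its projection to `M^{m-1}`; but for `m ≥ 2` the
space `M^{m-1}` is infinite, so that projection cannot be cofinite. -/

open Set Function

section Boxes

variable {ι α : Type*} [Finite ι] [DecidableEq ι] {S : Set (ι → α)}

theorem Set.Finite.univ_pi_of_subset_of_finite_sections
    (hsec : ∀ (i : ι) (a : ι → α), {x : α | update a i x ∈ S}.Finite)
    {A : ι → Set α} (hAS : univ.pi A ⊆ S) : (univ.pi A).Finite := by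
  rcases (univ.pi A).eq_empty_or_nonempty with hempty | ⟨a, ha⟩
  · simp [hempty]
  · refine Set.Finite.pi fun i => (hsec i a).subset fun x hx => hAS ?_
    exact (update_mem_pi_iff_of_mem ha).mpr fun _ => hx

theorem Set.Finite.of_eq_iUnion_univ_pi_of_finite_sections {κ : Type*} [Finite κ]
    (hsec : ∀ (i : ι) (a : ι → α), {x : α | update a i x ∈ S}.Finite)
    {A : κ → ι → Set α} (hS : S = ⋃ j, univ.pi (A j)) : S.Finite := by
  subst hS
  exact finite_iUnion fun j =>
    Set.Finite.univ_pi_of_subset_of_finite_sections hsec (subset_iUnion (fun j => univ.pi (A j)) j)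

end Boxes

/-- If `S ⊆ M^m` (with `M` infinite, `m ≥ 2`) has all sections by `m-1` fixed
coordinates finite and nonempty, and all projections forgetting one coordinate
cofinite, then `S` is not a finite union of boxes `A₁ × ⋯ × A_m`. -/
theorem not_finite_union_of_boxes {M : Type*} [Infinite M] {m : ℕ} (hm : 2 ≤ m)
    (S : Set (Fin m → M))
    (hsec : ∀ (i : Fin m) (a : Fin m → M),
      {x : M | Function.update a i x ∈ S}.Finite ∧
      {x : M | Function.update a i x ∈ S}.Nonempty)
    (hproj : ∀ i : Fin m,
      {g : {j : Fin m // j ≠ i} → M |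
        g ∉ (fun (a : Fin m → M) (j : {j : Fin m // j ≠ i}) => a j.1) '' S}.Finite) :
    ¬ ∃ (k : ℕ) (A : Fin k → Fin m → Set M),
      S = ⋃ j, {a : Fin m → M | ∀ i, a i ∈ A j i} := by
  rintro ⟨k, A, hS⟩
  simp only [← mem_univ_pi, ofPred_mem_eq] at hS
  have hSfin : S.Finite :=
    Set.Finite.of_eq_iUnion_univ_pi_of_finite_sections (fun i a => (hsec i a).1) hS
  have : Nontrivial (Fin m) := Fin.nontrivial_iff_two_le.mpr hm
  obtain ⟨i, i', hi'⟩ := exists_pair_ne (Fin m)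
  have : Nonempty {j : Fin m // j ≠ i} := ⟨⟨i', hi'.symm⟩⟩
  exact (hSfin.image _).infinite_compl (hproj i)
end
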